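/- Let G = {(x,y) ∈ ℝ² : sin(2πx)·sin(2πy) = 0}. There exists a constant C > 0 such that for all x, y ∈ G there is a path γ ∈ H¹([0,1];ℝ²) with γ(0) = x, γ(1) = y, γ(t) ∈ G for every t ∈ [0,1], and length ∫₀¹|γ'(t)|dt ≤ C·|x − y|. -/

import Mathlib

/-!
Every point of the grid lies on a vertical or a horizontal grid line, and swapping the coordinates
preserves the grid, so we may start on a vertical line. A point on a horizontal line is reached
through the crossing point, at cost at most `2|x - y|`. A point on another vertical line is at
least `1/2` away horizontally, which pays for a detour through the horizontal grid line nearest to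
`x` (at most `1/4` away): the length is at most `1/4 + |Δ₀| + |Δ₁| + 1/4 ≤ 3|x - y|`.
Paths are concatenated by running both at double speed, which doubles the derivative and keeps
lengths additive.
-/

open MeasureTheory Filter
open scoped ENNReal Topology

noncomputable section

abbrev Euc (n : ℕ) : Type := EuclideanSpace ℝ (Fin n)

/-- `u` is an `H¹` curve on `[a,b]` with (a.e.) derivative `u'`. -/
def IsH1On {n : ℕ} (u u' : ℝ → Euc n) (a b : ℝ) : Prop :=
  IntervalIntegrable u' volume a b ∧
  IntervalIntegrable (fun t => ‖u' t‖ ^ 2) volume a b ∧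
  ∀ t ∈ Set.Icc a b, u t = u a + ∫ s in a..t, u' s

/-- The localized homogenization energy `ψ_T^z(w)` (value `⊤` if no admissible curve exists). -/
def psiT {n : ℕ} {α : Type*} (φ : Euc n → α) (z : α) (T : ℝ) (w : Euc n) : ℝ≥0∞ :=
  ENNReal.ofReal (1 / T) *
    sInf {e : ℝ≥0∞ | ∃ u u' : ℝ → Euc n, IsH1On u u' 0 T ∧
      (∀ t ∈ Set.Icc (0 : ℝ) T, φ (u t) = z) ∧
      ‖u 0‖ ≤ Real.sqrt (n : ℝ) ∧ ‖u T - T • w‖ ≤ Real.sqrt (n : ℝ) ∧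
      e = ENNReal.ofReal (∫ t in (0 : ℝ)..T, ‖u' t‖ ^ 2)}

/-- The grid `G = {sin(2πx)·sin(2πy) = 0}`, i.e. the union of all horizontal and
vertical lines with a coordinate in `(1/2)ℤ`. -/
def gridG : Set (Euc 2) :=
  {p : Euc 2 | Real.sin (2 * Real.pi * p 0) * Real.sin (2 * Real.pi * p 1) = 0}

open Real

def H1JoinedIn {n : ℕ} (S : Set (Euc n)) (x y : Euc n) (L : ℝ) : Prop :=
  ∃ γ γ' : ℝ → Euc n, IsH1On γ γ' 0 1 ∧ γ 0 = x ∧ γ 1 = y ∧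
    (∀ t ∈ Set.Icc (0 : ℝ) 1, γ t ∈ S) ∧ (∫ t in (0 : ℝ)..1, ‖γ' t‖) ≤ L

def joinHalves {α : Type*} (f g : ℝ → α) (t : ℝ) : α :=
  if t ≤ 1 / 2 then f (2 * t) else g (2 * t - 1)

section JoinHalves

variable {E : Type*} [NormedAddCommGroup E] {f g : ℝ → E}

lemma comp_joinHalves {α β : Type*} (F : α → β) (f g : ℝ → α) :
    (fun t => F (joinHalves f g t)) = joinHalves (F ∘ f) (F ∘ g) := by
  ext t
  simp only [joinHalves, Function.comp_apply]
  split_ifs <;> rfl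

lemma joinHalves_of_le {α : Type*} (f g : ℝ → α) {t : ℝ} (ht : t ≤ 1 / 2) :
    joinHalves f g t = f (2 * t) :=
  if_pos ht

lemma joinHalves_of_gt {α : Type*} (f g : ℝ → α) {t : ℝ} (ht : 1 / 2 < t) :
    joinHalves f g t = g (2 * t - 1) :=
  if_neg (not_le.2 ht)

lemma IntervalIntegrable.joinHalves (hf : IntervalIntegrable f volume 0 1)
    (hg : IntervalIntegrable g volume 0 1) :
    IntervalIntegrable (joinHalves f g) volume 0 1 := by
  have hf' : IntervalIntegrable (fun t => f (2 * t)) volume 0 (1 / 2) := by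
    simpa using hf.comp_mul_left (c := 2)
  have hg' : IntervalIntegrable (fun t => g (2 * t - 1)) volume (1 / 2) 1 := by
    simpa using (hg.comp_sub_right 1).comp_mul_left (c := 2)
  refine (hf'.congr fun t ht => ?_).trans (hg'.congr fun t ht => ?_)
  · rw [Set.uIoc_of_le (by norm_num)] at ht
    exact (joinHalves_of_le f g ht.2).symm
  · rw [Set.uIoc_of_le (by norm_num)] at ht
    exact (joinHalves_of_gt f g ht.1).symm

lemma integral_joinHalves_of_le [NormedSpace ℝ E] {t : ℝ} (ht₀ : 0 ≤ t) (ht : t ≤ 1 / 2) :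
    ∫ s in (0 : ℝ)..t, joinHalves f g s = (1 / 2 : ℝ) • ∫ s in (0 : ℝ)..2 * t, f s := by
  have hfg : ∀ s ∈ Set.uIoc 0 t, joinHalves f g s = f (2 * s) := fun s hs => by
    rw [Set.uIoc_of_le ht₀] at hs
    exact joinHalves_of_le f g (hs.2.trans ht)
  rw [intervalIntegral.integral_congr_ae (Filter.Eventually.of_forall hfg),
    intervalIntegral.integral_comp_mul_left _ two_ne_zero]
  norm_num

lemma integral_joinHalves_of_gt [NormedSpace ℝ E] {t : ℝ} (ht : 1 / 2 < t) :
    ∫ s in (1 / 2 : ℝ)..t, joinHalves f g s = (1 / 2 : ℝ) • ∫ s in (0 : ℝ)..2 * t - 1, g s := by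
  have hfg : ∀ s ∈ Set.uIoc (1 / 2) t, joinHalves f g s = g (2 * s - 1) := fun s hs => by
    rw [Set.uIoc_of_le ht.le] at hs
    exact joinHalves_of_gt f g hs.1
  rw [intervalIntegral.integral_congr_ae (Filter.Eventually.of_forall hfg),
    intervalIntegral.integral_comp_mul_sub _ two_ne_zero]
  norm_num

lemma integral_joinHalves [NormedSpace ℝ E] (hf : IntervalIntegrable f volume 0 1)
    (hg : IntervalIntegrable g volume 0 1) :
    ∫ s in (0 : ℝ)..1, joinHalves f g s =
      (1 / 2 : ℝ) • ((∫ s in (0 : ℝ)..1, f s) + ∫ s in (0 : ℝ)..1, g s) := by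
  have hfg := hf.joinHalves hg
  rw [← intervalIntegral.integral_add_adjacent_intervals (b := 1 / 2)
      (hfg.mono_set (Set.uIcc_subset_uIcc_left (by norm_num [Set.uIcc_of_le])))
      (hfg.mono_set (Set.uIcc_subset_uIcc_right (by norm_num [Set.uIcc_of_le]))),
    integral_joinHalves_of_le (by norm_num) le_rfl, integral_joinHalves_of_gt (by norm_num),
    smul_add]
  norm_num

end JoinHalves

lemma isH1On_joinHalves {n : ℕ} {u u' v v' : ℝ → Euc n} (hu : IsH1On u u' 0 1)
    (hv : IsH1On v v' 0 1) (huv : u 1 = v 0) :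
    IsH1On (joinHalves u v) (joinHalves (fun s => (2 : ℝ) • u' s) (fun s => (2 : ℝ) • v' s)) 0 1 := by
  obtain ⟨hu'_int, hu'_sq, hu_ftc⟩ := hu
  obtain ⟨hv'_int, hv'_sq, hv_ftc⟩ := hv
  have hint : IntervalIntegrable
      (joinHalves (fun s => (2 : ℝ) • u' s) (fun s => (2 : ℝ) • v' s)) volume 0 1 :=
    (hu'_int.smul (2 : ℝ)).joinHalves (hv'_int.smul (2 : ℝ))
  have hsq : ∀ w : ℝ → Euc n, IntervalIntegrable (fun t => ‖w t‖ ^ 2) volume 0 1 →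
      IntervalIntegrable (fun t => ‖(2 : ℝ) • w t‖ ^ 2) volume 0 1 := fun w hw => by
    convert hw.const_mul 4 using 2 with t
    rw [norm_smul, mul_pow]
    norm_num
  refine ⟨hint, ?_, fun t ht => ?_⟩
  · rw [comp_joinHalves (fun w : Euc n => ‖w‖ ^ 2)]
    exact (hsq u' hu'_sq).joinHalves (hsq v' hv'_sq)
  rw [joinHalves_of_le u v (by norm_num : (0 : ℝ) ≤ 1 / 2), mul_zero]
  rcases le_or_gt t (1 / 2) with hle | hgt
  · rw [joinHalves_of_le u v hle, integral_joinHalves_of_le ht.1 hle,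
      intervalIntegral.integral_smul, smul_smul, hu_ftc (2 * t) ⟨by linarith [ht.1], by linarith⟩]
    norm_num
  · have hhalf : (1 / 2 : ℝ) ∈ Set.uIcc 0 1 := Set.Icc_subset_uIcc ⟨by norm_num, by norm_num⟩
    rw [joinHalves_of_gt u v hgt, ← intervalIntegral.integral_add_adjacent_intervals
      (hint.mono_set (Set.uIcc_subset_uIcc_left hhalf))
      (hint.mono_set (Set.uIcc_subset_uIcc hhalf (Set.Icc_subset_uIcc ht))),
      integral_joinHalves_of_le (t := 1 / 2) (by norm_num) le_rfl, integral_joinHalves_of_gt hgt,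
      intervalIntegral.integral_smul, intervalIntegral.integral_smul, smul_smul, smul_smul,
      hv_ftc (2 * t - 1) ⟨by linarith, by linarith [ht.2]⟩, ← huv, hu_ftc 1 (by simp)]
    norm_num
    abel

namespace H1JoinedIn

variable {n : ℕ} {S : Set (Euc n)} {x y z : Euc n} {L L₁ L₂ : ℝ}

lemma mono (h : H1JoinedIn S x y L) (hL : L ≤ L₂) : H1JoinedIn S x y L₂ := by
  obtain ⟨γ, γ', hγ, h0, h1, hS, hlen⟩ := h
  exact ⟨γ, γ', hγ, h0, h1, hS, hlen.trans hL⟩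

lemma of_segment_subset (h : segment ℝ x y ⊆ S) : H1JoinedIn S x y (dist x y) := by
  refine ⟨fun t => x + t • (y - x), fun _ => y - x,
    ⟨intervalIntegrable_const, intervalIntegrable_const, fun t _ => by simp [smul_sub]⟩,
    by simp, by simp, fun t ht => h ?_, by simp [dist_eq_norm']⟩
  rw [segment_eq_image']
  exact Set.mem_image_of_mem _ ht

lemma trans (hxy : H1JoinedIn S x y L₁) (hyz : H1JoinedIn S y z L₂) :
    H1JoinedIn S x z (L₁ + L₂) := by
  obtain ⟨u, u', hu, hu0, hu1, huS, hu_len⟩ := hxy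
  obtain ⟨v, v', hv, hv0, hv1, hvS, hv_len⟩ := hyz
  refine ⟨joinHalves u v, joinHalves (fun s => (2 : ℝ) • u' s) (fun s => (2 : ℝ) • v' s),
    isH1On_joinHalves hu hv (hu1.trans hv0.symm), ?_, ?_, fun t ht => ?_, ?_⟩
  · rw [joinHalves_of_le u v (by norm_num), mul_zero, hu0]
  · rw [joinHalves_of_gt u v (by norm_num)]
    norm_num [hv1]
  · rcases le_or_gt t (1 / 2) with hle | hgt
    · rw [joinHalves_of_le u v hle]
      exact huS _ ⟨by linarith [ht.1], by linarith⟩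
    · rw [joinHalves_of_gt u v hgt]
      exact hvS _ ⟨by linarith, by linarith [ht.2]⟩
  · rw [comp_joinHalves norm]
    simp only [Function.comp_def, norm_smul, Real.norm_two]
    rw [integral_joinHalves (hu.1.norm.const_mul 2) (hv.1.norm.const_mul 2),
      intervalIntegral.integral_const_mul, intervalIntegral.integral_const_mul, smul_eq_mul]
    linarith

lemma map {m : ℕ} {T : Set (Euc m)} (h : H1JoinedIn S x y L) (f : Euc n →ₗᵢ[ℝ] Euc m)
    (hf : Set.MapsTo f S T) : H1JoinedIn T (f x) (f y) L := by
  obtain ⟨γ, γ', ⟨hγ'_int, hγ'_sq, hγ_ftc⟩, h0, h1, hS, hlen⟩ := h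
  refine ⟨fun t => f (γ t), fun t => f (γ' t),
    ⟨⟨f.toContinuousLinearMap.integrable_comp hγ'_int.1,
      f.toContinuousLinearMap.integrable_comp hγ'_int.2⟩, by simpa using hγ'_sq,
      fun t ht => ?_⟩, congrArg f h0, congrArg f h1, fun t ht => hf (hS t ht), by simpa using hlen⟩
  show f (γ t) = f (γ 0) + ∫ s in (0 : ℝ)..t, f (γ' s)
  rw [hγ_ftc t ht, map_add]
  exact congrArg _ (f.toContinuousLinearMap.intervalIntegral_comp_comm
    (hγ'_int.mono_set (Set.uIcc_subset_uIcc_left (by simpa [Set.uIcc_of_le] using ht)))).symm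

end H1JoinedIn

lemma sin_two_pi_mul_eq_zero_iff {a : ℝ} : sin (2 * π * a) = 0 ↔ ∃ k : ℤ, (k : ℝ) = 2 * a := by
  rw [sin_eq_zero_iff]
  refine exists_congr fun k => ⟨fun h => ?_, fun h => by rw [h]; ring⟩
  nlinarith [pi_pos]

lemma half_le_abs_sub_of_sin_two_pi_mul_eq_zero {a b : ℝ} (ha : sin (2 * π * a) = 0)
    (hb : sin (2 * π * b) = 0) (hab : a ≠ b) : 1 / 2 ≤ |a - b| := by
  obtain ⟨k, hk⟩ := sin_two_pi_mul_eq_zero_iff.1 ha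
  obtain ⟨m, hm⟩ := sin_two_pi_mul_eq_zero_iff.1 hb
  have hkm : 1 ≤ |((k - m : ℤ) : ℝ)| := by
    rw [← Int.cast_abs]
    exact_mod_cast Int.one_le_abs (sub_ne_zero.2 fun h => hab (by rw [h] at hk; linarith))
  rw [Int.cast_sub, hk, hm, ← mul_sub, abs_mul, abs_two] at hkm
  linarith

lemma exists_sin_two_pi_mul_eq_zero_abs_sub_le (a : ℝ) :
    ∃ c, sin (2 * π * c) = 0 ∧ |a - c| ≤ 1 / 4 := by
  refine ⟨round (2 * a) / 2, ?_, ?_⟩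
  · rw [sin_two_pi_mul_eq_zero_iff]
    exact ⟨round (2 * a), by ring⟩
  · have h := abs_sub_round (2 * a)
    rw [show 2 * a - round (2 * a) = 2 * (a - round (2 * a) / 2) by ring, abs_mul, abs_two] at h
    linarith

lemma abs_sub_apply_le_dist {n : ℕ} (p q : Euc n) (i : Fin n) : |p i - q i| ≤ dist p q :=
  PiLp.dist_apply_le p q i

lemma dist_eq_abs_sub_of_apply_eq {p q : Euc 2} {i j : Fin 2} (hij : i ≠ j) (h : p i = q i) :
    dist p q = |p j - q j| := by
  rw [EuclideanSpace.dist_eq, Fin.sum_univ_two, ← sqrt_sq_eq_abs]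
  fin_cases i <;> fin_cases j <;> simp_all [Real.dist_eq, sq_abs]

lemma segment_subset_gridG {x y : Euc 2} (i : Fin 2) (hx : sin (2 * π * x i) = 0)
    (hxy : x i = y i) : segment ℝ x y ⊆ gridG := by
  have hline : segment ℝ x y ⊆ {p : Euc 2 | p i = x i} :=
    (convex_hyperplane (EuclideanSpace.proj i : Euc 2 →L[ℝ] ℝ).isLinear _).segment_subset rfl
      hxy.symm
  intro p hp
  have hpi : p i = x i := hline hp
  fin_cases i <;> simp_all [gridG]

lemma h1JoinedIn_gridG_of_fst_of_snd {x y : Euc 2} (hx : sin (2 * π * x 0) = 0)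
    (hy : sin (2 * π * y 1) = 0) : H1JoinedIn gridG x y (2 * dist x y) := by
  set c : Euc 2 := !₂[x 0, y 1]
  have hxc := H1JoinedIn.of_segment_subset (segment_subset_gridG (y := c) 0 hx (by simp [c]))
  have hcy := H1JoinedIn.of_segment_subset (segment_subset_gridG (x := c) (y := y) 1
    (by simpa [c]) (by simp [c]))
  refine (hxc.trans hcy).mono ?_
  rw [dist_eq_abs_sub_of_apply_eq (i := 0) (j := 1) (by decide) (by simp [c]),
    dist_eq_abs_sub_of_apply_eq (i := 1) (j := 0) (by decide) (by simp [c])]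
  simp only [c, Matrix.cons_val_zero, Matrix.cons_val_one]
  linarith [abs_sub_apply_le_dist x y 0, abs_sub_apply_le_dist x y 1, abs_sub_comm (x 0) (y 0)]

lemma h1JoinedIn_gridG_of_fst_of_fst {x y : Euc 2} (hx : sin (2 * π * x 0) = 0)
    (hy : sin (2 * π * y 0) = 0) : H1JoinedIn gridG x y (3 * dist x y) := by
  by_cases hxy : x 0 = y 0
  · exact (H1JoinedIn.of_segment_subset (segment_subset_gridG 0 hx hxy)).mono
      (by linarith [dist_nonneg (x := x) (y := y)])
  obtain ⟨c, hc, hxc⟩ := exists_sin_two_pi_mul_eq_zero_abs_sub_le (x 1)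
  set a : Euc 2 := !₂[x 0, c]
  set b : Euc 2 := !₂[y 0, c]
  have hxa := H1JoinedIn.of_segment_subset (segment_subset_gridG (y := a) 0 hx (by simp [a]))
  have hab := H1JoinedIn.of_segment_subset (segment_subset_gridG (x := a) (y := b) 1
    (by simpa [a]) (by simp [a, b]))
  have hby := H1JoinedIn.of_segment_subset (segment_subset_gridG (x := b) (y := y) 0
    (by simpa [b]) (by simp [b]))
  refine ((hxa.trans hab).trans hby).mono ?_
  rw [dist_eq_abs_sub_of_apply_eq (i := 0) (j := 1) (by decide) (by simp [a]),
    dist_eq_abs_sub_of_apply_eq (i := 1) (j := 0) (by decide) (by simp [a, b]),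
    dist_eq_abs_sub_of_apply_eq (i := 0) (j := 1) (by decide) (by simp [b])]
  simp only [a, b, Matrix.cons_val_zero, Matrix.cons_val_one]
  have hgap := half_le_abs_sub_of_sin_two_pi_mul_eq_zero hx hy hxy
  linarith [abs_sub_apply_le_dist x y 0, abs_sub_apply_le_dist x y 1, abs_sub_comm c (y 1),
    abs_sub_le c (x 1) (y 1), abs_sub_comm c (x 1)]

def swapCoords : Euc 2 ≃ₗᵢ[ℝ] Euc 2 :=
  LinearIsometryEquiv.piLpCongrLeft 2 ℝ ℝ (Equiv.swap 0 1)

@[simp] lemma swapCoords_apply_zero (p : Euc 2) : swapCoords p 0 = p 1 := by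
  simp [swapCoords]

@[simp] lemma swapCoords_apply_one (p : Euc 2) : swapCoords p 1 = p 0 := by
  simp [swapCoords]

@[simp] lemma swapCoords_swapCoords (p : Euc 2) : swapCoords (swapCoords p) = p := by
  ext i
  fin_cases i <;> simp

lemma mapsTo_swapCoords_gridG : Set.MapsTo swapCoords gridG gridG := fun p hp => by
  rw [gridG, Set.mem_ofPred_eq, swapCoords_apply_zero, swapCoords_apply_one, mul_comm]
  exact hp

lemma h1JoinedIn_gridG {x y : Euc 2} (hx : x ∈ gridG) (hy : y ∈ gridG) :
    H1JoinedIn gridG x y (3 * dist x y) := by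
  suffices key : ∀ x y : Euc 2, sin (2 * π * x 0) = 0 → y ∈ gridG →
      H1JoinedIn gridG x y (3 * dist x y) by
    rcases mul_eq_zero.1 hx with hx₀ | hx₁
    · exact key x y hx₀ hy
    · simpa using (key (swapCoords x) (swapCoords y) (by simpa using hx₁)
        (mapsTo_swapCoords_gridG hy)).map swapCoords.toLinearIsometry mapsTo_swapCoords_gridG
  intro x y hx hy
  rcases mul_eq_zero.1 hy with hy₀ | hy₁
  · exact h1JoinedIn_gridG_of_fst_of_fst hx hy₀
  · exact (h1JoinedIn_gridG_of_fst_of_snd hx hy₁).mono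
      (by linarith [dist_nonneg (x := x) (y := y)])

/-- Controlled-length property of the grid: any two points of `G` are joined by an
`H¹` path in `G` of length at most `C` times their Euclidean distance. -/
theorem grid_controlled_length :
    ∃ C : ℝ, 0 < C ∧ ∀ x y : Euc 2, x ∈ gridG → y ∈ gridG →
      ∃ γ γ' : ℝ → Euc 2, IsH1On γ γ' 0 1 ∧ γ 0 = x ∧ γ 1 = y ∧
        (∀ t ∈ Set.Icc (0 : ℝ) 1, γ t ∈ gridG) ∧
        (∫ t in (0 : ℝ)..1, ‖γ' t‖) ≤ C * ‖x - y‖ := by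
  refine ⟨3, by norm_num, fun x y hx hy => ?_⟩
  rw [← dist_eq_norm]
  exact h1JoinedIn_gridG hx hy
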